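/- arXiv:1108.6031 — 2 statements merged into one kernel-verified Lean document; each statement's English description precedes it below -/
import Mathlib

section
/- If Q = exp(x̂) ∈ SO(3) for x ∈ R^3 with ‖x‖ ≠ 0, G = diag(g1,g2,g3), and e_R = (1/2)(GQ - QᵀG)ᵛ, then ‖e_R‖² = ((1-cos‖x‖)²/(4‖x‖⁴))·[(g1-g2)²x1²x2² + (g2-g3)²x2²x3² + (g3-g1)²x3²x1²] + (sin²‖x‖/(4‖x‖²))·[(g1+g2)²x3² + (g2+g3)²x1² + (g3+g1)²x2²]. -/
open Matrix
noncomputable section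
def hat (x : Fin 3 → ℝ) : Matrix (Fin 3) (Fin 3) ℝ :=
  !![0, -x 2, x 1; x 2, 0, -x 0; -x 1, x 0, 0]
def vee (A : Matrix (Fin 3) (Fin 3) ℝ) : Fin 3 → ℝ := ![A 2 1, A 0 2, A 1 0]
def SO3 (R : Matrix (Fin 3) (Fin 3) ℝ) : Prop := Rᵀ * R = 1 ∧ R.det = 1
def enorm3 (x : Fin 3 → ℝ) : ℝ := Real.sqrt (x ⬝ᵥ x)
def frobNorm {m n : ℕ} (A : Matrix (Fin m) (Fin n) ℝ) : ℝ := Real.sqrt ((Aᵀ * A).trace)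
def specNorm {m n : ℕ} (A : Matrix (Fin m) (Fin n) ℝ) : ℝ :=
  ‖LinearMap.toContinuousLinearMap (Matrix.toEuclideanLin A)‖
def Gmat (g1 g2 g3 : ℝ) : Matrix (Fin 3) (Fin 3) ℝ := Matrix.diagonal ![g1, g2, g3]
def Psi (G R Rd : Matrix (Fin 3) (Fin 3) ℝ) : ℝ := (1/2 : ℝ) * (G * (1 - Rdᵀ * R)).trace
def eRvec (G R Rd : Matrix (Fin 3) (Fin 3) ℝ) : Fin 3 → ℝ :=
  (1/2 : ℝ) • vee (G * Rdᵀ * R - Rᵀ * Rd * G)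
def Emat (G R Rd : Matrix (Fin 3) (Fin 3) ℝ) : Matrix (Fin 3) (Fin 3) ℝ :=
  (1/2 : ℝ) • ((Rᵀ * Rd * G).trace • (1 : Matrix (Fin 3) (Fin 3) ℝ) - Rᵀ * Rd * G)

lemma enorm3_sq (x : Fin 3 → ℝ) : (enorm3 x)^2 = x 0 ^ 2 + x 1 ^ 2 + x 2 ^ 2 := by
  have h : x ⬝ᵥ x = x 0 ^ 2 + x 1 ^ 2 + x 2 ^ 2 := by
    simp [dotProduct, Fin.sum_univ_three]; ring
  rw [enorm3, Real.sq_sqrt (by nlinarith [sq_nonneg (x 0), sq_nonneg (x 1), sq_nonneg (x 2)]), h]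

lemma enorm3_pos (x : Fin 3 → ℝ) (hx : x ≠ 0) : 0 < enorm3 x := by
  have h : 0 < x 0 ^ 2 + x 1 ^ 2 + x 2 ^ 2 := by
    rcases Function.ne_iff.mp hx with ⟨i, hi⟩
    simp only [Pi.zero_apply] at hi
    fin_cases i <;> simp at hi <;>
      nlinarith [sq_nonneg (x 0), sq_nonneg (x 1), sq_nonneg (x 2), sq_pos_of_ne_zero hi]
  have h2 := enorm3_sq x
  have h0 : 0 ≤ enorm3 x := by rw [enorm3]; positivity
  nlinarith

lemma hat_cube (x : Fin 3 → ℝ) : hat x ^ 3 = (-(enorm3 x)^2) • hat x := by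
  rw [enorm3_sq]
  ext i j
  rw [pow_succ, pow_two]
  fin_cases i <;> fin_cases j <;>
    simp [hat, Matrix.mul_apply, Fin.sum_univ_three] <;> ring

lemma hat_pow_odd (x : Fin 3 → ℝ) (k : ℕ) :
    hat x ^ (2 * k + 1) = ((-1)^k * (enorm3 x)^(2*k)) • hat x := by
  induction k with
  | zero => simp
  | succ k ih =>
    have h1 : 2 * (k+1) + 1 = (2 * k + 1) + 2 := by ring
    rw [h1, pow_add, ih, smul_mul_assoc, ← pow_succ']
    norm_num
    rw [hat_cube, smul_smul, show 2*(k+1) = 2*k+2 from by ring]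
    congr 1
    ring

set_option maxHeartbeats 2000000 in
theorem rodrigues (x : Fin 3 → ℝ) (hx : x ≠ 0) :
    NormedSpace.exp (hat x) = 1 + (Real.sin (enorm3 x) / enorm3 x) • hat x
      + ((1 - Real.cos (enorm3 x)) / (enorm3 x)^2) • (hat x * hat x) := by
  set θ := enorm3 x with hθ
  have hθ0 : θ ≠ 0 := ne_of_gt (enorm3_pos x hx)
  set A := hat x with hA
  -- even powers
  have hpe : ∀ k : ℕ, A ^ (2 * k + 2) = ((-1)^k * θ^(2*k)) • (A * A) := by
    intro k
    have : 2 * k + 2 = (2 * k + 1) + 1 := by ring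
    rw [this, pow_succ, hat_pow_odd x k, smul_mul_assoc]
  have f0 : ((Nat.factorial 0 : ℝ))⁻¹ • A ^ 0 = (1 : Matrix (Fin 3) (Fin 3) ℝ) := by simp
  -- odd part
  have hsin := Real.hasSum_sin θ
  have hodd :
      HasSum (fun k : ℕ => ((Nat.factorial (2*k+1) : ℝ))⁻¹ • A ^ (2*k+1)) ((Real.sin θ / θ) • A) := by
    have h1 := (hsin.div_const θ).smul_const A
    convert h1 using 2 with k
    rw [hat_pow_odd x k, smul_smul]
    congr 1
    field_simp
    ring
  -- even part
  have hcos := Real.hasSum_cos θ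
  have htail : HasSum (fun k : ℕ => (-1:ℝ) ^ (k+1) * θ ^ (2 * (k+1)) / (Nat.factorial (2 * (k+1)) : ℝ))
      (Real.cos θ - 1) := by
    have h2 := (hasSum_nat_add_iff' (f := fun n : ℕ => (-1:ℝ) ^ n * θ ^ (2 * n) / (Nat.factorial (2 * n) : ℝ)) 1).mpr hcos
    simpa using h2
  have htail2 : HasSum (fun k : ℕ => ((Nat.factorial (2*k+2) : ℝ))⁻¹ • A ^ (2*k+2))
      (((1 - Real.cos θ) / θ^2) • (A * A)) := by
    have h3 := ((htail.neg.div_const (θ^2)).smul_const (A * A))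
    convert h3 using 2 with k
    · rw [hpe k, smul_smul]
      congr 1
      rw [show 2*(k+1) = 2*k+2 from by ring]
      field_simp
      ring
    · congr 1
      ring
  have heven : HasSum (fun k : ℕ => ((Nat.factorial (2*k) : ℝ))⁻¹ • A ^ (2*k))
      (1 + ((1 - Real.cos θ) / θ^2) • (A * A)) := by
    have ht : HasSum (fun k : ℕ => ((Nat.factorial (2*(k+1)) : ℝ))⁻¹ • A ^ (2*(k+1)))
        (((1 - Real.cos θ) / θ^2) • (A * A)) := by
      convert htail2 using 2 with k
      rw [show 2*(k+1) = 2*k+2 from by ring]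
    have h4 := (hasSum_nat_add_iff (f := fun k : ℕ => ((Nat.factorial (2*k) : ℝ))⁻¹ • A ^ (2*k)) 1).mp ht
    simpa [f0, add_comm] using h4
  have htot : HasSum (fun n : ℕ => ((Nat.factorial n : ℝ))⁻¹ • A ^ n)
      ((1 + ((1 - Real.cos θ) / θ^2) • (A * A)) + (Real.sin θ / θ) • A) :=
    HasSum.even_add_odd heven hodd
  rw [NormedSpace.exp_eq_tsum (𝕂 := ℝ)]
  beta_reduce
  rw [htot.tsum_eq]
  abel

set_option maxHeartbeats 2000000 in
theorem stmt9 (g1 g2 g3 : ℝ) (x : Fin 3 → ℝ) (hx : x ≠ 0)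
    (Q : Matrix (Fin 3) (Fin 3) ℝ) (hQ : Q = NormedSpace.exp (hat x)) :
    (enorm3 ((1/2 : ℝ) • vee (Gmat g1 g2 g3 * Q - Qᵀ * Gmat g1 g2 g3)))^2
      = ((1 - Real.cos (enorm3 x))^2 / (4 * (enorm3 x)^4)) *
          ((g1 - g2)^2 * (x 0)^2 * (x 1)^2 + (g2 - g3)^2 * (x 1)^2 * (x 2)^2
            + (g3 - g1)^2 * (x 2)^2 * (x 0)^2)
        + ((Real.sin (enorm3 x))^2 / (4 * (enorm3 x)^2)) *
          ((g1 + g2)^2 * (x 2)^2 + (g2 + g3)^2 * (x 0)^2 + (g3 + g1)^2 * (x 1)^2) := by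
  subst hQ
  rw [rodrigues x hx]
  set θ := enorm3 x with hθdef
  have hθ0 : θ ≠ 0 := ne_of_gt (enorm3_pos x hx)
  rw [enorm3_sq]
  simp [Gmat, hat, vee, Matrix.transpose_apply, Matrix.mul_apply, Matrix.one_apply,
    Fin.sum_univ_three, Matrix.diagonal_apply, Matrix.vecHead, Matrix.vecTail]
  field_simp
  ring
end
end

section
/- Under the same kinematics, the attitude error vector e_R = (1/2)(GR_dᵀR - RᵀR_dG)ᵛ satisfies ė_R = E(R,R_d)·e_Ω, where E(R,R_d) = (1/2)(tr(RᵀR_dG)·I - RᵀR_dG). -/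
open Matrix
noncomputable section
lemma hat_transpose (x : Fin 3 → ℝ) : (hat x)ᵀ = -hat x := by
  ext i j; fin_cases i <;> fin_cases j <;> simp [hat]

lemma hat_sub (x y : Fin 3 → ℝ) : hat (x - y) = hat x - hat y := by
  ext i j; fin_cases i <;> fin_cases j <;> simp [hat] <;> ring

lemma adj_eq {Q : Matrix (Fin 3) (Fin 3) ℝ} (hQ : Qᵀ * Q = 1) (hdet : Q.det = 1) :
    adjugate Q = Qᵀ := by
  have h2 : Q * Qᵀ = 1 := mul_eq_one_comm.mp hQ
  calc adjugate Q = adjugate Q * (Q * Qᵀ) := by rw [h2, mul_one]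
    _ = (adjugate Q * Q) * Qᵀ := by rw [mul_assoc]
    _ = Qᵀ := by rw [adjugate_mul, hdet, one_smul, one_mul]

lemma hat_mulVec {Q : Matrix (Fin 3) (Fin 3) ℝ} (hQ : Qᵀ * Q = 1) (hdet : Q.det = 1)
    (x : Fin 3 → ℝ) : hat (Q.mulVec x) = Q * hat x * Qᵀ := by
  have hadj := adj_eq hQ hdet
  rw [adjugate_fin_three] at hadj
  have h := fun i j => congrFun (congrFun hadj i) j
  have h00 := h 0 0; have h01 := h 0 1; have h02 := h 0 2
  have h10 := h 1 0; have h11 := h 1 1; have h12 := h 1 2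
  have h20 := h 2 0; have h21 := h 2 1; have h22 := h 2 2
  simp only [cons_val', cons_val_zero, cons_val_one, head_cons, head_fin_const,
    empty_val', cons_val_fin_one, transpose_apply, of_apply, cons_val_two,
    tail_cons] at h00 h01 h02 h10 h11 h12 h20 h21 h22
  clear h hadj
  ext i j
  fin_cases i <;> fin_cases j <;>
    simp [hat, mul_apply, mulVec, dotProduct, Fin.sum_univ_three]
  all_goals first
    | ring1
    | linear_combination x 0 * h00 + x 1 * h10 + x 2 * h20
    | linear_combination -(x 0 * h00 + x 1 * h10 + x 2 * h20)
    | linear_combination x 0 * h01 + x 1 * h11 + x 2 * h21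
    | linear_combination -(x 0 * h01 + x 1 * h11 + x 2 * h21)
    | linear_combination x 0 * h02 + x 1 * h12 + x 2 * h22
    | linear_combination -(x 0 * h02 + x 1 * h12 + x 2 * h22)

lemma hat_comm_lemma (A : Matrix (Fin 3) (Fin 3) ℝ) (x : Fin 3 → ℝ) :
    hat x * A + Aᵀ * hat x
      = hat ((A.trace • (1 : Matrix (Fin 3) (Fin 3) ℝ) - A).mulVec x) := by
  ext i j
  fin_cases i <;> fin_cases j <;>
    simp [hat, mul_apply, mulVec, Matrix.vecMul, dotProduct, Fin.sum_univ_three,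
      Matrix.trace, Matrix.diag, Matrix.one_apply] <;> ring

lemma hd_entry_mul {A B : ℝ → Matrix (Fin 3) (Fin 3) ℝ} {A' B' : Matrix (Fin 3) (Fin 3) ℝ}
    {t : ℝ}
    (hA : ∀ i j, HasDerivAt (fun s => A s i j) (A' i j) t)
    (hB : ∀ i j, HasDerivAt (fun s => B s i j) (B' i j) t) :
    ∀ i j, HasDerivAt (fun s => (A s * B s) i j) ((A' * B t + A t * B') i j) t := by
  intro i j
  have h : HasDerivAt (fun s => ∑ k : Fin 3, A s i k * B s k j)
      (∑ k : Fin 3, (A' i k * B t k j + A t i k * B' k j)) t :=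
    HasDerivAt.fun_sum (fun k _ => (hA i k).mul (hB k j))
  have e1 : (fun s => (A s * B s) i j) = fun s => ∑ k : Fin 3, A s i k * B s k j := by
    funext s; rw [mul_apply]
  rw [e1]
  convert h using 1
  simp [mul_apply, Finset.sum_add_distrib]

theorem stmt12 (g1 g2 g3 : ℝ) (hg1 : 0 < g1) (hg2 : 0 < g2) (hg3 : 0 < g3)
    (R Rd : ℝ → Matrix (Fin 3) (Fin 3) ℝ) (Ω Ωd : ℝ → Fin 3 → ℝ)
    (hSO : ∀ t, SO3 (R t)) (hSOd : ∀ t, SO3 (Rd t))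
    (hR : ∀ t i j, HasDerivAt (fun s => R s i j) ((R t * hat (Ω t)) i j) t)
    (hRd : ∀ t i j, HasDerivAt (fun s => Rd s i j) ((Rd t * hat (Ωd t)) i j) t)
    (eΩ : ℝ → Fin 3 → ℝ)
    (heΩ : ∀ t, eΩ t = Ω t - ((R t)ᵀ * Rd t).mulVec (Ωd t)) (t : ℝ) (i : Fin 3) :
    HasDerivAt (fun s => eRvec (Gmat g1 g2 g3) (R s) (Rd s) i)
      ((Emat (Gmat g1 g2 g3) (R t) (Rd t)).mulVec (eΩ t) i) t := by
  set G : Matrix (Fin 3) (Fin 3) ℝ := Gmat g1 g2 g3 with hGdef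
  set Q : Matrix (Fin 3) (Fin 3) ℝ := (R t)ᵀ * Rd t with hQdef
  set H : Matrix (Fin 3) (Fin 3) ℝ := hat (Ω t) with hHdef
  set Hd : Matrix (Fin 3) (Fin 3) ℝ := hat (Ωd t) with hHddef
  -- basic SO(3) facts
  have hRtR : (R t)ᵀ * R t = 1 := (hSO t).1
  have hRdtRd : (Rd t)ᵀ * Rd t = 1 := (hSOd t).1
  have hRRt : R t * (R t)ᵀ = 1 := mul_eq_one_comm.mp hRtR
  have hQT : Qᵀ = (Rd t)ᵀ * R t := by
    rw [hQdef, transpose_mul, transpose_transpose]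
  have hQQ : Qᵀ * Q = 1 := by
    rw [hQT, hQdef, mul_assoc, ← mul_assoc (R t), hRRt, one_mul, hRdtRd]
  have hQdet : Q.det = 1 := by
    rw [hQdef, det_mul, det_transpose, (hSO t).2, (hSOd t).2, one_mul]
  have hGT : Gᵀ = G := by rw [hGdef]; exact diagonal_transpose _
  -- the "vee" argument and its derivative target
  set w : Fin 3 → ℝ :=
    (((R t)ᵀ * Rd t * G).trace • (1 : Matrix (Fin 3) (Fin 3) ℝ)
      - (R t)ᵀ * Rd t * G).mulVec (eΩ t) with hwdef
  -- entrywise derivatives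
  have hRT : ∀ i j, HasDerivAt (fun s => (R s)ᵀ i j) ((R t * H)ᵀ i j) t := by
    intro i j
    simpa only [transpose_apply] using hR t j i
  have hRdT : ∀ i j, HasDerivAt (fun s => (Rd s)ᵀ i j) ((Rd t * Hd)ᵀ i j) t := by
    intro i j
    simpa only [transpose_apply] using hRd t j i
  have hGc : ∀ i j, HasDerivAt (fun s => G i j) ((0 : Matrix (Fin 3) (Fin 3) ℝ) i j) t := by
    intro i j
    simpa using hasDerivAt_const t (G i j)
  have hA := hd_entry_mul (hd_entry_mul hGc hRdT) (fun i j => hR t i j)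
  have hB := hd_entry_mul (hd_entry_mul hRT (fun i j => hRd t i j)) hGc
  set D : Matrix (Fin 3) (Fin 3) ℝ :=
    ((0 * (Rd t)ᵀ + G * (Rd t * Hd)ᵀ) * R t + G * (Rd t)ᵀ * (R t * H))
      - (((R t * H)ᵀ * Rd t + (R t)ᵀ * (Rd t * Hd)) * G + (R t)ᵀ * Rd t * 0) with hDdef
  have hM : ∀ i j, HasDerivAt
      (fun s => (G * (Rd s)ᵀ * R s - (R s)ᵀ * Rd s * G) i j) (D i j) t := by
    intro i j
    have := (hA i j).fun_sub (hB i j)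
    simpa only [Matrix.sub_apply, hDdef] using this
  -- the key algebraic identity D = hat w
  have hhat : hat (Q.mulVec (Ωd t)) = Q * Hd * Qᵀ := hat_mulVec hQQ hQdet (Ωd t)
  have e1 : hat (eΩ t) = H - Q * Hd * Qᵀ := by
    rw [heΩ, hat_sub, hhat, hQdef]
  have hcomm := hat_comm_lemma (Q * G) (eΩ t)
  have hwQ : w = ((Q * G).trace • (1 : Matrix (Fin 3) (Fin 3) ℝ) - Q * G).mulVec (eΩ t) := by
    rw [hwdef, hQdef]
  have lhs_eq : hat (eΩ t) * (Q * G) + (Q * G)ᵀ * hat (eΩ t)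
      = H * Q * G - Q * Hd * G + G * Qᵀ * H - G * Hd * Qᵀ := by
    rw [e1, transpose_mul Q G, hGT]
    have c1 : Q * Hd * Qᵀ * (Q * G) = Q * Hd * G := by
      rw [mul_assoc (Q * Hd), ← mul_assoc Qᵀ, hQQ, one_mul]
    have c2 : G * Qᵀ * (Q * Hd * Qᵀ) = G * Hd * Qᵀ := by
      rw [mul_assoc G Qᵀ, ← mul_assoc Qᵀ (Q * Hd) Qᵀ, ← mul_assoc Qᵀ Q Hd, hQQ, one_mul, ← mul_assoc]
    rw [sub_mul, mul_sub, c1, c2]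
    noncomm_ring
  have hD_eq : D = H * Q * G - Q * Hd * G + G * Qᵀ * H - G * Hd * Qᵀ := by
    rw [hDdef, hQdef, hQT]
    have hHT : (R t * H)ᵀ = (-H) * (R t)ᵀ := by
      rw [transpose_mul, hHdef, hat_transpose]
    have hHdT : (Rd t * Hd)ᵀ = (-Hd) * (Rd t)ᵀ := by
      rw [transpose_mul, hHddef, hat_transpose]
    rw [hHT, hHdT]
    noncomm_ring
  have key : D = hat w := by
    rw [hD_eq, hwQ, ← hat_comm_lemma (Q * G) (eΩ t), lhs_eq]
  have main : ∀ i j, HasDerivAt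
      (fun s => (G * (Rd s)ᵀ * R s - (R s)ᵀ * Rd s * G) i j) ((hat w) i j) t := by
    intro i j; rw [← key]; exact hM i j
  -- finish, case by case on i
  have hval : ∀ i : Fin 3, (Emat G (R t) (Rd t)).mulVec (eΩ t) i = (1/2 : ℝ) * w i := by
    intro i
    rw [Emat, Matrix.smul_mulVec, Pi.smul_apply, smul_eq_mul, hwdef]
  fin_cases i
  · show HasDerivAt (fun s => eRvec G (R s) (Rd s) 0) ((Emat G (R t) (Rd t)).mulVec (eΩ t) 0) t
    have hf : (fun s => eRvec G (R s) (Rd s) 0)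
        = fun s => (1/2 : ℝ) * ((G * (Rd s)ᵀ * R s - (R s)ᵀ * Rd s * G) 2 1) := by
      funext s; simp [eRvec, vee]
    have h := (main 2 1).const_mul (1/2 : ℝ)
    have hw0 : (hat w) 2 1 = w 0 := by simp [hat]
    rw [hf, hval 0, ← hw0]
    exact h
  · show HasDerivAt (fun s => eRvec G (R s) (Rd s) 1) ((Emat G (R t) (Rd t)).mulVec (eΩ t) 1) t
    have hf : (fun s => eRvec G (R s) (Rd s) 1)
        = fun s => (1/2 : ℝ) * ((G * (Rd s)ᵀ * R s - (R s)ᵀ * Rd s * G) 0 2) := by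
      funext s; simp [eRvec, vee]
    have h := (main 0 2).const_mul (1/2 : ℝ)
    have hw1 : (hat w) 0 2 = w 1 := by simp [hat]
    rw [hf, hval 1, ← hw1]
    exact h
  · show HasDerivAt (fun s => eRvec G (R s) (Rd s) 2) ((Emat G (R t) (Rd t)).mulVec (eΩ t) 2) t
    have hf : (fun s => eRvec G (R s) (Rd s) 2)
        = fun s => (1/2 : ℝ) * ((G * (Rd s)ᵀ * R s - (R s)ᵀ * Rd s * G) 1 0) := by
      funext s; simp [eRvec, vee]
    have h := (main 1 0).const_mul (1/2 : ℝ)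
    have hw2 : (hat w) 1 0 = w 2 := by simp [hat]
    rw [hf, hval 2, ← hw2]
    exact h
end
end
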